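/- (Le Cam two-point lower bound.) For every r ≥ 1, every n ≥ 1, every ε ∈ (0,1), every measurable estimator θ̂_r : ℕ^n → ℝ, and every measurable function h : ℝ → ℝ, one has sup over all probability mass functions P on ℕ of P_P( ℓ(θ̂_r(X_n), θ_r(P;X_n)) ≥ ε ) ≥ 1/2. -/

import Mathlib

open MeasureTheory ProbabilityTheory Real Filter ENNReal

noncomputable section

/-- The law of an i.i.d. sample of size `n` from the discrete distribution `P` on `ℕ`. -/
def sampleMeasure (P : PMF ℕ) (n : ℕ) : Measure (Fin n → ℕ) :=
  Measure.pi fun _ => P.toMeasure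

/-- The probability mass of symbol `j` under `P`, as a real number. -/
def pReal (P : PMF ℕ) (j : ℕ) : ℝ := (P j).toReal

/-- Empirical frequency of the symbol `j` in the sample `ω`. -/
def freq {n : ℕ} (ω : Fin n → ℕ) (j : ℕ) : ℕ :=
  (Finset.univ.filter fun i => ω i = j).card

/-- The `r`-order missing mass `θ_r(P; X_n)`. -/
def missingMass (p : ℕ → ℝ) (r : ℕ) {n : ℕ} (ω : Fin n → ℕ) : ℝ :=
  ∑' j, p j ^ r * (if freq ω j = 0 then 1 else 0)

/-- The multiplicative (relative) loss: `ℓ(t, θ) = |t/θ - 1|` if `θ > 0`, and `h t` otherwise. -/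
def mloss (h : ℝ → ℝ) (t θ : ℝ) : ℝ := if 0 < θ then |t / θ - 1| else h t

/-!
A single distribution suffices. Let `t` be the estimate on the all-zeros sample and take `P` the
Bernoulli law on `{0, 1}` with a small parameter `q ≤ 1 / (2n)`. The all-zeros sample then has
probability `(1 - q) ^ n ≥ 1 / 2` (Bernoulli's inequality), and on it the missing mass is `q ^ r`.
Since `t` does not depend on `q`, a small enough `q` forces `|t / q ^ r - 1| ≥ ε`: either
`t ≤ 0`, or `t / q ^ r ≥ 1 + ε`.
-/

open scoped NNReal

def bernoulliNat (q : ℝ≥0) (hq : q ≤ 1) : PMF ℕ :=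
  PMF.ofFinset (fun j => if j = 0 then 1 - (q : ℝ≥0∞) else if j = 1 then (q : ℝ≥0∞) else 0)
    {0, 1} (by simp [tsub_add_cancel_of_le (ENNReal.coe_le_one_iff.2 hq)])
    (fun j hj => by simp_all)

section bernoulliNat

variable {q : ℝ≥0} (hq : q ≤ 1)

@[simp] lemma bernoulliNat_apply_zero : bernoulliNat q hq 0 = 1 - (q : ℝ≥0∞) := rfl

@[simp] lemma bernoulliNat_apply_one : bernoulliNat q hq 1 = q := rfl

lemma bernoulliNat_apply_of_ne {j : ℕ} (h0 : j ≠ 0) (h1 : j ≠ 1) : bernoulliNat q hq j = 0 := by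
  simp [bernoulliNat, PMF.ofFinset_apply, h0, h1]

end bernoulliNat

lemma freq_const {n : ℕ} (a j : ℕ) : freq (fun _ : Fin n => a) j = if a = j then n else 0 := by
  split_ifs with h <;> simp [freq, h]

lemma missingMass_bernoulliNat_const_zero {q : ℝ≥0} (hq : q ≤ 1) {r n : ℕ} (hr : r ≠ 0)
    (hn : n ≠ 0) : missingMass (pReal (bernoulliNat q hq)) r (fun _ : Fin n => 0) = q ^ r := by
  rw [missingMass, tsum_eq_single 1]
  · simp [freq_const, pReal]
  · intro j hj1
    rcases eq_or_ne j 0 with rfl | hj0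
    · simp [freq_const, hn]
    · simp [pReal, bernoulliNat_apply_of_ne hq hj0 hj1, hr]

lemma sampleMeasure_singleton_const (P : PMF ℕ) (n a : ℕ) :
    sampleMeasure P n {fun _ => a} = P a ^ n := by
  simp [sampleMeasure, PMF.toMeasure_apply_singleton]

lemma half_le_one_sub_pow {q : ℝ≥0} {n : ℕ} (hq : q ≤ 1) (hnq : n * q ≤ 1 / 2) :
    (1 / 2 : ℝ≥0∞) ≤ (1 - (q : ℝ≥0∞)) ^ n := by
  have hreal : (1 / 2 : ℝ) ≤ (1 - q) ^ n := by
    have hnq' : (n : ℝ) * q ≤ 1 / 2 := by exact_mod_cast hnq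
    have := one_add_mul_le_pow (a := -(q : ℝ)) (by linarith [NNReal.coe_le_one.2 hq]) n
    simp only [mul_neg, ← sub_eq_add_neg] at this
    linarith
  have hnn : (1 / 2 : ℝ≥0) ≤ (1 - q) ^ n := by
    rw [← NNReal.coe_le_coe]
    push_cast [NNReal.coe_sub hq]
    exact hreal
  simpa [ENNReal.coe_sub] using ENNReal.coe_le_coe.2 hnn

lemma exists_pos_forall_le_mloss (h : ℝ → ℝ) (t : ℝ) {ε : ℝ} (hε : ε ∈ Set.Ioo (0 : ℝ) 1) :
    ∃ c > 0, ∀ θ, 0 < θ → θ ≤ c → ε ≤ mloss h t θ := by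
  obtain ⟨hε0, hε1⟩ := hε
  rcases lt_or_ge 0 t with ht | ht
  · refine ⟨t / (1 + ε), by positivity, fun θ hθ hθc => ?_⟩
    have : 1 + ε ≤ t / θ := by rwa [le_div_iff₀ hθ, ← le_div_iff₀' (by positivity)]
    rw [mloss, if_pos hθ]
    exact le_abs.2 (Or.inl (by linarith))
  · refine ⟨1, one_pos, fun θ hθ _ => ?_⟩
    have : t / θ ≤ 0 := div_nonpos_of_nonpos_of_nonneg ht hθ.le
    rw [mloss, if_pos hθ]
    exact le_abs.2 (Or.inr (by linarith))

lemma exists_pos_le_and_mul_le_half {c : ℝ} (hc : 0 < c) {n : ℕ} (hn : n ≠ 0) :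
    ∃ q : ℝ≥0, 0 < q ∧ (q : ℝ) ≤ c ∧ q ≤ 1 ∧ n * q ≤ 1 / 2 := by
  have hn0 : (n : ℝ≥0) ≠ 0 := by exact_mod_cast hn
  set q : ℝ≥0 := min c.toNNReal (2 * n)⁻¹
  have hnq : n * q ≤ 1 / 2 := calc
    n * q ≤ n * (2 * n : ℝ≥0)⁻¹ := mul_le_mul_of_nonneg_left (min_le_right _ _) (by positivity)
    _ = 1 / 2 := by field_simp
  refine ⟨q, lt_min (Real.toNNReal_pos.2 hc) (by positivity), ?_, ?_, hnq⟩
  · exact Real.coe_toNNReal c hc.le ▸ NNReal.coe_le_coe.2 (min_le_left _ _)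
  · calc q ≤ n * q := le_mul_of_one_le_left' (by exact_mod_cast Nat.one_le_iff_ne_zero.2 hn)
      _ ≤ 1 := hnq.trans (by norm_num)

theorem missingMass_leCam_lower_bound_general (r n : ℕ) (hr : 1 ≤ r) (hn : 1 ≤ n)
    (ε : ℝ) (hε : ε ∈ Set.Ioo (0 : ℝ) 1)
    (est : (Fin n → ℕ) → ℝ)
    (h : ℝ → ℝ) :
    (1 / 2 : ℝ≥0∞) ≤
      ⨆ P : PMF ℕ,
        sampleMeasure P n
          {ω | mloss h (est ω) (missingMass (pReal P) r ω) ≥ ε} := by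
  set ω₀ : Fin n → ℕ := fun _ => 0
  obtain ⟨c, hc0, hc⟩ := exists_pos_forall_le_mloss h (est ω₀) hε
  obtain ⟨q, hq0, hqc, hq1, hnq⟩ := exists_pos_le_and_mul_le_half hc0 (by omega : n ≠ 0)
  set P := bernoulliNat q hq1
  have hmem : ω₀ ∈ {ω | mloss h (est ω) (missingMass (pReal P) r ω) ≥ ε} := by
    rw [Set.mem_ofPred_eq, ge_iff_le, missingMass_bernoulliNat_const_zero hq1 (by omega) (by omega)]
    exact hc _ (by positivity) ((pow_le_of_le_one q.2 hq1 (by omega : r ≠ 0)).trans hqc)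
  refine le_iSup_of_le P ?_
  calc (1 / 2 : ℝ≥0∞) ≤ (1 - (q : ℝ≥0∞)) ^ n := half_le_one_sub_pow hq1 hnq
    _ = sampleMeasure P n {ω₀} := by rw [sampleMeasure_singleton_const, bernoulliNat_apply_zero]
    _ ≤ _ := measure_mono (Set.singleton_subset_iff.2 hmem)

/-- Le Cam two-point lower bound: the worst-case probability of a relative error at least
`ε` is at least `1/2`, for every estimator of the `r`-order missing mass. -/
theorem missingMass_leCam_lower_bound (r n : ℕ) (hr : 1 ≤ r) (hn : 1 ≤ n)
    (ε : ℝ) (hε : ε ∈ Set.Ioo (0 : ℝ) 1)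
    (est : (Fin n → ℕ) → ℝ) (hest : Measurable est)
    (h : ℝ → ℝ) (hh : Measurable h) :
    (1 / 2 : ℝ≥0∞) ≤
      ⨆ P : PMF ℕ,
        sampleMeasure P n
          {ω | mloss h (est ω) (missingMass (pReal P) r ω) ≥ ε} :=
  missingMass_leCam_lower_bound_general r n hr hn ε hε est h

end
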